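/- Let 0<q<1 and let {P_n}_{n≥0} be a sequence of monic real polynomials, deg P_n = n, orthogonal with respect to a weight function w positive on an open interval (a,b). Suppose there is a real polynomial π of degree at most 4 such that ∫_a^b (D_q² P_m)(x)(D_q² P_n)(x) π(x) w(x) dx = 0 for all m ≠ n with m,n ≥ 2, and ∫_a^b ((D_q² P_n)(x))² π(x) w(x) dx ≠ 0 for all n ≥ 2. Then for each n ≥ 4 there exist real constants b_{n,n+j} (j ∈ {−2,−1,0,1,2}) such that P_n(x) = Σ_{j=−2}^{2} b_{n,n+j} (D_q² P_{n+j})(x). -/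

import Mathlib

set_option autoImplicit false

open Polynomial MeasureTheory

/-- `γ_n = (q^{n/2} - q^{-n/2})/(q^{1/2} - q^{-1/2})`. -/
noncomputable def gammaAW (q : ℝ) (n : ℕ) : ℝ :=
  ((Real.sqrt q) ^ n - ((Real.sqrt q)⁻¹) ^ n) / (Real.sqrt q - (Real.sqrt q)⁻¹)

/-- `g` is the Askey–Wilson divided difference `D_q f`. -/
def IsAWDq (q : ℝ) (f g : Polynomial ℝ) : Prop :=
  ∀ z : ℝ, z ≠ 0 → z ^ 2 ≠ 1 →
    g.eval ((z + z⁻¹) / 2) =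
      (f.eval ((Real.sqrt q * z + (Real.sqrt q)⁻¹ * z⁻¹) / 2) -
          f.eval (((Real.sqrt q)⁻¹ * z + Real.sqrt q * z⁻¹) / 2)) /
        ((Real.sqrt q - (Real.sqrt q)⁻¹) * (z - z⁻¹) / 2)

/-- The Askey–Wilson operator `D_q` on polynomials. -/
noncomputable def awDq (q : ℝ) (f : Polynomial ℝ) : Polynomial ℝ :=
  letI := Classical.propDecidable (∃ g, IsAWDq q f g)
  if h : ∃ g, IsAWDq q f g then h.choose else 0

/-- `g` is the Askey–Wilson average `S_q f`. -/
def IsAWSq (q : ℝ) (f g : Polynomial ℝ) : Prop :=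
  ∀ z : ℝ, z ≠ 0 → z ^ 2 ≠ 1 →
    g.eval ((z + z⁻¹) / 2) =
      (f.eval ((Real.sqrt q * z + (Real.sqrt q)⁻¹ * z⁻¹) / 2) +
          f.eval (((Real.sqrt q)⁻¹ * z + Real.sqrt q * z⁻¹) / 2)) / 2

/-- The Askey–Wilson averaging operator `S_q` on polynomials. -/
noncomputable def awSq (q : ℝ) (f : Polynomial ℝ) : Polynomial ℝ :=
  letI := Classical.propDecidable (∃ g, IsAWSq q f g)
  if h : ∃ g, IsAWSq q f g then h.choose else 0

namespace AWAux

/-- Chebyshev-like `T` polynomials. -/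
noncomputable def Tb : ℕ → Polynomial ℝ
  | 0 => 1
  | 1 => X
  | n + 2 => C 2 * (X * Tb (n + 1)) - Tb n

/-- Chebyshev-like `U` polynomials. -/
noncomputable def Ub : ℕ → Polynomial ℝ
  | 0 => 1
  | 1 => C 2 * X
  | n + 2 => C 2 * (X * Ub (n + 1)) - Ub n

lemma Tb_eval (z : ℝ) (hz : z ≠ 0) :
    ∀ n, (Tb n).eval ((z + z⁻¹) / 2) = (z ^ n + (z⁻¹) ^ n) / 2 := by
  intro n
  induction n using Nat.twoStepInduction with
  | zero => simp [Tb]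
  | one => simp [Tb]
  | more n ih1 ih2 =>
    simp only [Tb, eval_sub, eval_mul, eval_C, eval_X, ih1, ih2]
    simp only [inv_pow]
    field_simp
    ring

lemma Ub_eval (z : ℝ) (hz : z ≠ 0) :
    ∀ n, (z - z⁻¹) * (Ub n).eval ((z + z⁻¹) / 2) = z ^ (n + 1) - (z⁻¹) ^ (n + 1) := by
  intro n
  induction n using Nat.twoStepInduction with
  | zero => simp [Ub]
  | one =>
    simp only [Ub, eval_mul, eval_C, eval_X]
    simp only [inv_pow]
    field_simp
    ring
  | more n ih1 ih2 =>
    simp only [Ub, eval_sub, eval_mul, eval_C, eval_X, mul_sub]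
    rw [show (z - z⁻¹) * (2 * ((z + z⁻¹) / 2 * eval ((z + z⁻¹) / 2) (Ub (n + 1)))) =
        (z + z⁻¹) * ((z - z⁻¹) * eval ((z + z⁻¹) / 2) (Ub (n + 1))) by ring, ih1, ih2]
    simp only [inv_pow]
    field_simp
    ring

lemma Tb_natDegree : ∀ n, (Tb n).natDegree ≤ n := by
  intro n
  induction n using Nat.twoStepInduction with
  | zero => simp [Tb]
  | one => simp [Tb]
  | more n ih1 ih2 =>
    have h1 : (X * Tb (n + 1)).natDegree ≤ n + 2 := by
      refine natDegree_mul_le.trans ?_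
      have hx := natDegree_X_le (R := ℝ)
      omega
    have h2 : (C (2:ℝ) * (X * Tb (n + 1))).natDegree ≤ n + 2 := by
      refine natDegree_mul_le.trans ?_
      simpa [natDegree_C] using h1
    exact (natDegree_sub_le _ _).trans (max_le h2 (by omega))

lemma Ub_natDegree : ∀ n, (Ub n).natDegree ≤ n := by
  intro n
  induction n using Nat.twoStepInduction with
  | zero => simp [Ub]
  | one =>
    refine (natDegree_mul_le (p := C (2:ℝ)) (q := X)).trans ?_
    simp [natDegree_C]
  | more n ih1 ih2 =>
    have h1 : (X * Ub (n + 1)).natDegree ≤ n + 2 := by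
      refine natDegree_mul_le.trans ?_
      have hx := natDegree_X_le (R := ℝ)
      omega
    have h2 : (C (2:ℝ) * (X * Ub (n + 1))).natDegree ≤ n + 2 := by
      refine natDegree_mul_le.trans ?_
      simpa [natDegree_C] using h1
    exact (natDegree_sub_le _ _).trans (max_le h2 (by omega))

lemma Tb_coeff : ∀ n, (Tb (n + 1)).coeff (n + 1) = 2 ^ n := by
  intro n
  induction n using Nat.twoStepInduction with
  | zero => simp [Tb]
  | one =>
    have e : Tb (1 + 1) = C 2 * (X * Tb 1) - Tb 0 := rfl
    rw [e]
    simp [Tb, coeff_C_mul, coeff_X_mul, coeff_one]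
  | more n ih1 ih2 =>
    have e : Tb (n + 2 + 1) = C 2 * (X * Tb (n + 2)) - Tb (n + 1) := rfl
    rw [e, coeff_sub, coeff_C_mul, show n + 2 + 1 = (n + 2) + 1 from rfl, coeff_X_mul, ih2,
      coeff_eq_zero_of_natDegree_lt (lt_of_le_of_lt (Tb_natDegree (n + 1)) (by omega))]
    ring

lemma Ub_coeff : ∀ n, (Ub n).coeff n = 2 ^ n := by
  intro n
  induction n using Nat.twoStepInduction with
  | zero => simp [Ub]
  | one => simp [Ub, coeff_C_mul]
  | more n ih1 ih2 =>
    have e : Ub (n + 2) = C 2 * (X * Ub (n + 1)) - Ub n := rfl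
    rw [e, coeff_sub, coeff_C_mul, show n + 2 = (n + 1) + 1 from rfl, coeff_X_mul, ih2,
      coeff_eq_zero_of_natDegree_lt (lt_of_le_of_lt (Ub_natDegree n) (by omega))]
    ring

lemma zsub_ne {z : ℝ} (hz : z ≠ 0) (hz2 : z ^ 2 ≠ 1) : z - z⁻¹ ≠ 0 := by
  intro h
  apply hz2
  rw [sub_eq_zero] at h
  calc z ^ 2 = z * z := sq z
    _ = z⁻¹ * z := by rw [← h]
    _ = 1 := inv_mul_cancel₀ hz

lemma isAWDq_C (q c : ℝ) : IsAWDq q (C c) 0 := by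
  intro z _ _; simp

lemma isAWDq_comb {q t : ℝ} {f₁ g₁ f₂ g₂ : Polynomial ℝ} (h1 : IsAWDq q f₁ g₁)
    (h2 : IsAWDq q f₂ g₂) : IsAWDq q (C t * f₁ + f₂) (C t * g₁ + g₂) := by
  intro z hz hz2
  simp only [eval_add, eval_mul, eval_C, h1 z hz hz2, h2 z hz hz2]
  rw [← mul_div_assoc, ← add_div]
  congr 1; ring

lemma sqrt_facts {q : ℝ} (hq0 : 0 < q) (hq1 : q < 1) :
    0 < Real.sqrt q ∧ Real.sqrt q < 1 ∧ Real.sqrt q - (Real.sqrt q)⁻¹ ≠ 0 := by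
  have h0 : 0 < Real.sqrt q := Real.sqrt_pos.2 hq0
  have h1 : Real.sqrt q < 1 := by
    rw [Real.sqrt_lt' one_pos]; nlinarith
  have h2 : 1 < (Real.sqrt q)⁻¹ := (one_lt_inv₀ h0).2 h1
  exact ⟨h0, h1, by intro h; rw [sub_eq_zero] at h; nlinarith⟩

lemma gammaAW_ne {q : ℝ} (hq0 : 0 < q) (hq1 : q < 1) {n : ℕ} (hn : n ≠ 0) :
    gammaAW q n ≠ 0 := by
  obtain ⟨h0, h1, h2⟩ := sqrt_facts hq0 hq1
  have hi : 1 < (Real.sqrt q)⁻¹ := (one_lt_inv₀ h0).2 h1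
  have hlt : Real.sqrt q ^ n < ((Real.sqrt q)⁻¹) ^ n :=
    pow_lt_pow_left₀ (by nlinarith) h0.le hn
  exact div_ne_zero (by intro h; rw [sub_eq_zero] at h; exact absurd h (ne_of_lt hlt)) h2

lemma gammaAW_one {q : ℝ} (hq0 : 0 < q) (hq1 : q < 1) : gammaAW q 1 = 1 := by
  obtain ⟨_, _, h2⟩ := sqrt_facts hq0 hq1
  simp [gammaAW, div_self h2]

lemma isAWDq_X {q : ℝ} (hq0 : 0 < q) (hq1 : q < 1) : IsAWDq q X (1 : Polynomial ℝ) := by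
  intro z hz hz2
  obtain ⟨h0, h1, h2⟩ := sqrt_facts hq0 hq1
  have hzd := zsub_ne hz hz2
  rw [eval_one, eval_X, eval_X, eq_comm,
    div_eq_one_iff_eq (div_ne_zero (mul_ne_zero h2 hzd) two_ne_zero)]
  ring

lemma isAWDq_Tb {q : ℝ} (hq0 : 0 < q) (hq1 : q < 1) (n : ℕ) :
    IsAWDq q (Tb (n + 1)) (C (gammaAW q (n + 1)) * Ub n) := by
  intro z hz hz2
  obtain ⟨h0, h1, h2⟩ := sqrt_facts hq0 hq1
  have hs : Real.sqrt q ≠ 0 := ne_of_gt h0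
  have hzd := zsub_ne hz hz2
  have e1 : (Real.sqrt q * z + (Real.sqrt q)⁻¹ * z⁻¹) / 2
      = (Real.sqrt q * z + (Real.sqrt q * z)⁻¹) / 2 := by rw [mul_inv]
  have e2 : ((Real.sqrt q)⁻¹ * z + Real.sqrt q * z⁻¹) / 2
      = ((Real.sqrt q)⁻¹ * z + ((Real.sqrt q)⁻¹ * z)⁻¹) / 2 := by rw [mul_inv, inv_inv]
  rw [e1, e2, Tb_eval _ (mul_ne_zero hs hz), Tb_eval _ (mul_ne_zero (inv_ne_zero hs) hz)]
  have hU : (Ub n).eval ((z + z⁻¹) / 2) = (z ^ (n + 1) - (z⁻¹) ^ (n + 1)) / (z - z⁻¹) := by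
    rw [eq_div_iff hzd, mul_comm]
    exact Ub_eval z hz n
  rw [eval_mul, eval_C, hU]
  simp only [gammaAW, mul_inv, inv_inv, mul_pow]
  rw [div_mul_div_comm, div_eq_div_iff (mul_ne_zero h2 hzd)
    (div_ne_zero (mul_ne_zero h2 hzd) two_ne_zero)]
  ring

lemma isAWDq_unique {q : ℝ} {f g g' : Polynomial ℝ} (h : IsAWDq q f g)
    (h' : IsAWDq q f g') : g = g' := by
  apply Polynomial.eq_of_infinite_eval_eq
  apply (Set.Ioi_infinite (1 : ℝ)).mono
  intro x hx
  have hx1 : (1 : ℝ) < x := hx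
  have hnn : 0 ≤ x ^ 2 - 1 := by nlinarith
  set r := Real.sqrt (x ^ 2 - 1) with hr
  have hrs : r ^ 2 = x ^ 2 - 1 := Real.sq_sqrt hnn
  set z := x + r with hzdef
  have hz1 : 1 < z := lt_of_lt_of_le hx1 (le_add_of_nonneg_right (Real.sqrt_nonneg _))
  have hz0 : z ≠ 0 := by intro h0; rw [h0] at hz1; norm_num at hz1
  have hz2 : z ^ 2 ≠ 1 := by nlinarith
  have hq2 : z ^ 2 - 2 * x * z + 1 = 0 := by
    rw [hzdef]; ring_nf; nlinarith [hrs]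
  have hzx : (z + z⁻¹) / 2 = x := by
    rw [div_eq_iff (two_ne_zero (α := ℝ))]
    field_simp
    nlinarith [hq2]
  show g.eval x = g'.eval x
  rw [← hzx, h z hz0 hz2, ← h' z hz0 hz2]

lemma awDq_eq {q : ℝ} {f g : Polynomial ℝ} (h : IsAWDq q f g) : awDq q f = g := by
  have hex : ∃ g, IsAWDq q f g := ⟨g, h⟩
  unfold awDq
  rw [dif_pos hex]
  exact isAWDq_unique hex.choose_spec h

lemma natDegree_le_of_top_coeff_zero {p : Polynomial ℝ} {d : ℕ} (h1 : p.natDegree ≤ d + 1)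
    (h2 : p.coeff (d + 1) = 0) : p.natDegree ≤ d := by
  rcases eq_or_ne p 0 with rfl | hp
  · simp
  · rcases lt_or_eq_of_le h1 with h | h
    · omega
    · exact absurd (by rw [Polynomial.leadingCoeff, h]; exact h2)
        (Polynomial.leadingCoeff_ne_zero.2 hp)

lemma key {q : ℝ} (hq0 : 0 < q) (hq1 : q < 1) :
    ∀ N (f : Polynomial ℝ), f.natDegree ≤ N + 1 →
      ∃ g, IsAWDq q f g ∧ g.natDegree ≤ N ∧
        g.coeff N = gammaAW q (N + 1) * f.coeff (N + 1) := by
  intro N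
  induction N with
  | zero =>
    intro f hf
    refine ⟨C (f.coeff 1) * 1 + 0, ?_, ?_, ?_⟩
    · have hcomb := isAWDq_comb (t := f.coeff 1) (isAWDq_X hq0 hq1) (isAWDq_C q (f.coeff 0))
      have hf' : f = C (f.coeff 1) * X + C (f.coeff 0) := eq_X_add_C_of_natDegree_le_one hf
      rw [← hf'] at hcomb
      exact hcomb
    · simp
    · simp [gammaAW_one hq0 hq1]
  | succ N IH =>
    intro f hf
    set t := f.coeff (N + 2) / 2 ^ (N + 1) with ht
    have htop : t * 2 ^ (N + 1) = f.coeff (N + 2) := by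
      rw [ht]; field_simp
    set f' := f - C t * Tb (N + 2) with hf'
    have hTc : (Tb (N + 2)).coeff (N + 2) = 2 ^ (N + 1) := Tb_coeff (N + 1)
    have hcz : f'.coeff (N + 2) = 0 := by
      rw [hf', coeff_sub, coeff_C_mul, hTc, htop, sub_self]
    have hdm : f'.natDegree ≤ N + 2 := by
      refine (natDegree_sub_le _ _).trans (max_le hf ?_)
      refine natDegree_mul_le.trans ?_
      have := Tb_natDegree (N + 2)
      simp [natDegree_C]
      omega
    have hdf' : f'.natDegree ≤ N + 1 := natDegree_le_of_top_coeff_zero hdm hcz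
    obtain ⟨g', hg', hd', hc'⟩ := IH f' hdf'
    refine ⟨C t * (C (gammaAW q (N + 2)) * Ub (N + 1)) + g', ?_, ?_, ?_⟩
    · have hcomb := isAWDq_comb (t := t) (isAWDq_Tb hq0 hq1 (N + 1)) hg'
      have : f = C t * Tb (N + 2) + f' := by rw [hf']; ring
      rw [this]
      exact hcomb
    · refine (natDegree_add_le _ _).trans (max_le ?_ (by omega))
      refine natDegree_mul_le.trans ?_
      have h2 : (C (gammaAW q (N + 2)) * Ub (N + 1)).natDegree ≤ N + 1 := by
        refine natDegree_mul_le.trans ?_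
        have := Ub_natDegree (N + 1)
        simp [natDegree_C]
        omega
      simp [natDegree_C]
      omega
    · rw [coeff_add, coeff_C_mul, coeff_C_mul, Ub_coeff,
        coeff_eq_zero_of_natDegree_lt (lt_of_le_of_lt hd' (Nat.lt_succ_self N)),
        add_zero, ← htop]
      ring

lemma awDq_bound {q : ℝ} (hq0 : 0 < q) (hq1 : q < 1) (f : Polynomial ℝ) (N : ℕ)
    (hf : f.natDegree ≤ N + 1) :
    (awDq q f).natDegree ≤ N ∧ (awDq q f).coeff N = gammaAW q (N + 1) * f.coeff (N + 1) := by
  obtain ⟨g, hg, h1, h2⟩ := key hq0 hq1 N f hf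
  rw [awDq_eq hg]
  exact ⟨h1, h2⟩

lemma awDq_degree_exact {q : ℝ} (hq0 : 0 < q) (hq1 : q < 1) (f : Polynomial ℝ) (N : ℕ)
    (hdeg : f.natDegree = N + 1) (hlc : f.coeff (N + 1) ≠ 0) :
    (awDq q f).natDegree = N ∧ (awDq q f).coeff N ≠ 0 := by
  obtain ⟨h1, h2⟩ := awDq_bound hq0 hq1 f N (le_of_eq hdeg)
  have hne : (awDq q f).coeff N ≠ 0 := by
    rw [h2]
    exact mul_ne_zero (gammaAW_ne hq0 hq1 (Nat.succ_ne_zero N)) hlc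
  exact ⟨le_antisymm h1 (le_natDegree_of_ne_zero hne), hne⟩

noncomputable def Iw (a b : ℝ) (w : ℝ → ℝ) (p : Polynomial ℝ) : ℝ :=
  ∫ x in Set.Ioo a b, p.eval x * w x

lemma integ {a b : ℝ} {w : ℝ → ℝ}
    (hint : ∀ k : ℕ, IntegrableOn (fun x => x ^ k * w x) (Set.Ioo a b))
    (p : Polynomial ℝ) : IntegrableOn (fun x => p.eval x * w x) (Set.Ioo a b) := by
  have he : (fun x => p.eval x * w x)
      = fun x => ∑ k ∈ Finset.range (p.natDegree + 1), p.coeff k * (x ^ k * w x) := by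
    funext x
    rw [eval_eq_sum_range, Finset.sum_mul]
    exact Finset.sum_congr rfl fun k _ => by ring
  rw [he]
  exact integrable_finset_sum _ fun k _ => ((hint k).const_mul _)

lemma Iw_add {a b : ℝ} {w : ℝ → ℝ}
    (hint : ∀ k : ℕ, IntegrableOn (fun x => x ^ k * w x) (Set.Ioo a b))
    (p r : Polynomial ℝ) : Iw a b w (p + r) = Iw a b w p + Iw a b w r := by
  unfold Iw
  simp only [eval_add, add_mul]
  exact integral_add (integ hint p) (integ hint r)

lemma Iw_zero {a b : ℝ} {w : ℝ → ℝ} : Iw a b w 0 = 0 := by simp [Iw]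

lemma Iw_Cmul {a b : ℝ} {w : ℝ → ℝ} (c : ℝ) (p : Polynomial ℝ) :
    Iw a b w (C c * p) = c * Iw a b w p := by
  unfold Iw
  simp only [eval_mul, eval_C, mul_assoc]
  exact integral_const_mul c _

lemma Iw_sum {a b : ℝ} {w : ℝ → ℝ}
    (hint : ∀ k : ℕ, IntegrableOn (fun x => x ^ k * w x) (Set.Ioo a b))
    {ι : Type} (s : Finset ι) (f : ι → Polynomial ℝ) :
    Iw a b w (∑ i ∈ s, f i) = ∑ i ∈ s, Iw a b w (f i) := by
  classical
  induction s using Finset.cons_induction with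
  | empty => simp [Iw_zero]
  | cons i s hi ih => rw [Finset.sum_cons, Finset.sum_cons, Iw_add hint, ih]

end AWAux

theorem stmt11 (q : ℝ) (hq0 : 0 < q) (hq1 : q < 1)
    (a b : ℝ) (hab : a < b)
    (w : ℝ → ℝ) (hw : ∀ x ∈ Set.Ioo a b, 0 < w x)
    (P : ℕ → Polynomial ℝ) (hmonic : ∀ n, (P n).Monic) (hdeg : ∀ n, (P n).natDegree = n)
    (hint : ∀ k : ℕ, IntegrableOn (fun x => x ^ k * w x) (Set.Ioo a b))
    (horth : ∀ m n, m ≠ n → ∫ x in Set.Ioo a b, (P m).eval x * (P n).eval x * w x = 0)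
    (π : Polynomial ℝ) (hπ : π.degree ≤ 4)
    (horthD2 : ∀ m n, 2 ≤ m → 2 ≤ n → m ≠ n →
      ∫ x in Set.Ioo a b, (awDq q (awDq q (P m))).eval x * (awDq q (awDq q (P n))).eval x *
        π.eval x * w x = 0)
    (hnormD2 : ∀ n, 2 ≤ n →
      ∫ x in Set.Ioo a b, ((awDq q (awDq q (P n))).eval x) ^ 2 * π.eval x * w x ≠ 0) :
    ∀ n, 4 ≤ n → ∃ bm2 bm1 b0 bp1 bp2 : ℝ,
      P n = C bm2 * awDq q (awDq q (P (n - 2))) + C bm1 * awDq q (awDq q (P (n - 1))) +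
        C b0 * awDq q (awDq q (P n)) + C bp1 * awDq q (awDq q (P (n + 1))) +
        C bp2 * awDq q (awDq q (P (n + 2))) := by
  classical
  intro n hn
  obtain ⟨m, rfl⟩ : ∃ m, n = m + 4 := ⟨n - 4, by omega⟩
  set Q : ℕ → Polynomial ℝ := fun k => awDq q (awDq q (P (k + 2))) with hQdef
  -- degrees of the Q's
  have hQd : ∀ k, (Q k).natDegree = k ∧ (Q k).coeff k ≠ 0 := by
    intro k
    have hlc : (P (k + 2)).coeff (k + 2) ≠ 0 := by
      have h1 := (hmonic (k + 2)).coeff_natDegree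
      rw [hdeg (k + 2)] at h1
      rw [h1]; exact one_ne_zero
    have h1 := AWAux.awDq_degree_exact hq0 hq1 (P (k + 2)) (k + 1) (hdeg (k + 2)) hlc
    have h2 := AWAux.awDq_degree_exact hq0 hq1 (awDq q (P (k + 2))) k h1.1 h1.2
    simpa [hQdef] using h2
  -- orthogonality in `Iw` form
  have horth' : ∀ j k, j ≠ k → AWAux.Iw a b w (P j * P k) = 0 := by
    intro j k hjk
    have he : AWAux.Iw a b w (P j * P k)
        = ∫ x in Set.Ioo a b, (P j).eval x * (P k).eval x * w x := by
      simp only [AWAux.Iw, eval_mul]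
    rw [he]; exact horth j k hjk
  have horthQ : ∀ j k, j ≠ k → AWAux.Iw a b w (Q j * Q k * π) = 0 := by
    intro j k hjk
    have he : AWAux.Iw a b w (Q j * Q k * π) = ∫ x in Set.Ioo a b,
        (awDq q (awDq q (P (j + 2)))).eval x * (awDq q (awDq q (P (k + 2)))).eval x *
          π.eval x * w x := by
      simp only [hQdef, AWAux.Iw, eval_mul]
    rw [he]
    exact horthD2 (j + 2) (k + 2) (by omega) (by omega) (by omega)
  have hnormQ : ∀ k, AWAux.Iw a b w (Q k * Q k * π) ≠ 0 := by
    intro k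
    have he : AWAux.Iw a b w (Q k * Q k * π) = ∫ x in Set.Ioo a b,
        ((awDq q (awDq q (P (k + 2)))).eval x) ^ 2 * π.eval x * w x := by
      simp only [hQdef, AWAux.Iw, eval_mul, sq]
    rw [he]; exact hnormD2 (k + 2) (by omega)
  have hP0 : P 0 = 1 := by
    have h0 := hdeg 0
    have h1 := (hmonic 0).coeff_natDegree
    rw [h0] at h1
    rw [eq_C_of_natDegree_eq_zero h0, h1, map_one]
  -- P (m+4) is orthogonal to everything of lower degree
  have orth_low : ∀ r : Polynomial ℝ, r.natDegree < m + 4 →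
      AWAux.Iw a b w (P (m + 4) * r) = 0 := by
    have H : ∀ d, ∀ r : Polynomial ℝ, r.natDegree ≤ d → d < m + 4 →
        AWAux.Iw a b w (P (m + 4) * r) = 0 := by
      intro d
      induction d with
      | zero =>
        intro r hr _
        have hrC : r = C (r.coeff 0) := eq_C_of_natDegree_eq_zero (Nat.le_zero.mp hr)
        have hsp : P (m + 4) * r = C (r.coeff 0) * (P (m + 4) * P 0) := by
          conv_lhs => rw [hrC]
          rw [hP0]; ring
        rw [hsp, AWAux.Iw_Cmul, horth' (m + 4) 0 (by omega), mul_zero]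
      | succ d IH =>
        intro r hr hd
        set c := r.coeff (d + 1) with hcdef
        set r' := r - C c * P (d + 1) with hr'
        have hcz : r'.coeff (d + 1) = 0 := by
          have hpc : (P (d + 1)).coeff (d + 1) = 1 := by
            have h1 := (hmonic (d + 1)).coeff_natDegree
            rwa [hdeg (d + 1)] at h1
          rw [hr', coeff_sub, coeff_C_mul, hpc, mul_one, sub_self]
        have hb : r'.natDegree ≤ d + 1 := by
          refine (natDegree_sub_le _ _).trans (max_le hr ?_)
          refine natDegree_mul_le.trans ?_
          simp [natDegree_C, hdeg]
        have hr'd : r'.natDegree ≤ d := AWAux.natDegree_le_of_top_coeff_zero hb hcz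
        have hsplit : P (m + 4) * r = C c * (P (m + 4) * P (d + 1)) + P (m + 4) * r' := by
          rw [hr']; ring
        rw [hsplit, AWAux.Iw_add hint, AWAux.Iw_Cmul, horth' (m + 4) (d + 1) (by omega),
          mul_zero, IH r' hr'd (by omega), add_zero]
    intro r hr
    exact H r.natDegree r le_rfl hr
  -- expansion in the Q basis
  have expand : ∀ N (r : Polynomial ℝ), r.natDegree ≤ N →
      ∃ c : ℕ → ℝ, r = ∑ k ∈ Finset.range (N + 1), C (c k) * Q k := by
    intro N
    induction N with
    | zero =>
      intro r hr
      set k0 := (Q 0).coeff 0 with hk0def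
      have hQ0 : Q 0 = C k0 := eq_C_of_natDegree_eq_zero (hQd 0).1
      have hr0 : r = C (r.coeff 0) := eq_C_of_natDegree_eq_zero (Nat.le_zero.mp hr)
      refine ⟨fun _ => r.coeff 0 / k0, ?_⟩
      rw [Finset.sum_range_one]
      show r = C (r.coeff 0 / k0) * Q 0
      rw [hQ0, ← C_mul, div_mul_cancel₀ _ (hQd 0).2, ← hr0]
    | succ N IH =>
      intro r hr
      set t := r.coeff (N + 1) / (Q (N + 1)).coeff (N + 1) with htdef
      set r' := r - C t * Q (N + 1) with hr'
      have hcz : r'.coeff (N + 1) = 0 := by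
        rw [hr', coeff_sub, coeff_C_mul, htdef, div_mul_cancel₀ _ (hQd (N + 1)).2, sub_self]
      have hb : r'.natDegree ≤ N + 1 := by
        refine (natDegree_sub_le _ _).trans (max_le hr ?_)
        refine natDegree_mul_le.trans ?_
        simp [natDegree_C, (hQd (N + 1)).1]
      have hr'd : r'.natDegree ≤ N := AWAux.natDegree_le_of_top_coeff_zero hb hcz
      obtain ⟨c', hc'⟩ := IH r' hr'd
      refine ⟨fun k => if k = N + 1 then t else c' k, ?_⟩
      rw [Finset.sum_range_succ]
      have hcong : ∑ k ∈ Finset.range (N + 1), C (if k = N + 1 then t else c' k) * Q k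
          = ∑ k ∈ Finset.range (N + 1), C (c' k) * Q k := by
        refine Finset.sum_congr rfl fun k hk => ?_
        rw [if_neg (by have := Finset.mem_range.mp hk; omega)]
      rw [hcong, ← hc']
      show r = r' + C (if (N + 1 : ℕ) = N + 1 then t else c' (N + 1)) * Q (N + 1)
      rw [if_pos rfl, hr']
      ring
  obtain ⟨c, hc⟩ := expand (m + 4) (P (m + 4)) (le_of_eq (hdeg (m + 4)))
  have hπ4 : π.natDegree ≤ 4 := natDegree_le_iff_degree_le.mpr hπ
  -- low coefficients vanish
  have hvanish : ∀ k, k < m → c k = 0 := by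
    intro k hk
    have hlow : AWAux.Iw a b w (P (m + 4) * (Q k * π)) = 0 := by
      apply orth_low
      refine lt_of_le_of_lt (natDegree_mul_le.trans ?_) (show k + 4 < m + 4 by omega)
      have := (hQd k).1
      omega
    have hexp : P (m + 4) * (Q k * π)
        = ∑ j ∈ Finset.range (m + 4 + 1), C (c j) * (Q j * Q k * π) := by
      rw [hc, Finset.sum_mul]
      exact Finset.sum_congr rfl fun j _ => by ring
    have hIex : AWAux.Iw a b w (P (m + 4) * (Q k * π))
        = ∑ j ∈ Finset.range (m + 4 + 1), c j * AWAux.Iw a b w (Q j * Q k * π) := by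
      rw [hexp, AWAux.Iw_sum hint]
      exact Finset.sum_congr rfl fun j _ => AWAux.Iw_Cmul _ _
    have hsingle : ∑ j ∈ Finset.range (m + 4 + 1), c j * AWAux.Iw a b w (Q j * Q k * π)
        = c k * AWAux.Iw a b w (Q k * Q k * π) :=
      Finset.sum_eq_single k (fun j _ hj => by rw [horthQ j k hj, mul_zero])
        (fun h => absurd (Finset.mem_range.mpr (by omega)) h)
    have h0 : c k * AWAux.Iw a b w (Q k * Q k * π) = 0 := by
      rw [← hsingle, ← hIex, hlow]
    rcases mul_eq_zero.mp h0 with h | h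
    · exact h
    · exact absurd h (hnormQ k)
  -- conclusion
  refine ⟨c m, c (m + 1), c (m + 2), c (m + 3), c (m + 4), ?_⟩
  have hz : ∑ j ∈ Finset.range m, C (c j) * Q j = 0 :=
    Finset.sum_eq_zero fun j hj => by
      rw [hvanish j (Finset.mem_range.mp hj), map_zero, zero_mul]
  have e2 : m + 4 - 2 = m + 2 := by omega
  have e1 : m + 4 - 1 = m + 3 := by omega
  conv_lhs => rw [hc]
  rw [Finset.sum_range_succ, Finset.sum_range_succ, Finset.sum_range_succ,
    Finset.sum_range_succ, Finset.sum_range_succ, hz, zero_add, e1, e2]
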